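/- arXiv:1409.6686 — 5 statements merged into one kernel-verified Lean document; each statement's English description precedes it below -/
import Mathlib

section
/- Let f : ℝ → ℝ be a nonnegative C¹ function, let G : ℝ → ℝ be a C¹ function, and let a, b : ℝ → ℝ be C¹ functions with a(t) > 0 and b(t) > 0 for all t. Define, for (t,x,y,z) ∈ ℝ × ℝ³, the self-similar variable s = (x² + y²)/a(t)² + z²/b(t)², and set ρ(t,x,y,z) = f(s)/(a(t)² b(t)), u₁(t,x,y,z) = (a'(t)/a(t)) x − G(t) y, u₂(t,x,y,z) = G(t) x + (a'(t)/a(t)) y, u₃(t,x,y,z) = (b'(t)/b(t)) z. Then (ρ, u₁, u₂, u₃) satisfies the three-dimensional equation of conservation of mass ∂ₜρ + ∂ₓ(ρu₁) + ∂_y(ρu₂) + ∂_z(ρu₃) = 0 at every point (t,x,y,z). -/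
/-! The self-similar variable `s` is transported by the flow, `∂ₜs + u · ∇s = 0`: the radial
parts of `u` rescale exactly as `a` and `b` do, and the rotation `G (-y, x, 0)` is tangent to the
level sets of `s`. Hence
`∂ₜρ + div (ρu) = (f'(s) (∂ₜs + u · ∇s) + f(s) (div u - (a²b)'/(a²b))) / (a²b)`,
and both brackets vanish because `div u = 2a'/a + b'/b` is the logarithmic derivative of `a²b`. -/

theorem HasDerivAt.comp_div {f s D : ℝ → ℝ} {f' s' k t : ℝ} (hf : HasDerivAt f f' (s t))
    (hs : HasDerivAt s s' t) (hD : HasDerivAt D (D t * k) t) (hD0 : D t ≠ 0) :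
    HasDerivAt (fun t => f (s t) / D t) (f' * s' / D t - f (s t) / D t * k) t := by
  refine ((hf.comp t hs).fun_div hD hD0).congr_deriv ?_
  rw [Function.comp_apply]
  field_simp

theorem HasDerivAt.comp_div_const_mul {f s u : ℝ → ℝ} {f' s' u' D x : ℝ}
    (hf : HasDerivAt f f' (s x)) (hs : HasDerivAt s s' x) (hu : HasDerivAt u u' x) :
    HasDerivAt (fun x => f (s x) / D * u x) (f' * s' / D * u x + f (s x) / D * u') x :=
  ((hf.comp x hs).div_const D).fun_mul hu

namespace RotationalSelfSimilar

noncomputable def selfSimilarVariable (a b : ℝ → ℝ) (t x y z : ℝ) : ℝ :=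
  (x ^ 2 + y ^ 2) / (a t) ^ 2 + z ^ 2 / (b t) ^ 2

variable {a b : ℝ → ℝ} {a' b' t x y z : ℝ}

theorem hasDerivAt_selfSimilarVariable_time (ha : HasDerivAt a a' t) (hb : HasDerivAt b b' t)
    (ha0 : a t ≠ 0) (hb0 : b t ≠ 0) :
    HasDerivAt (fun t' => selfSimilarVariable a b t' x y z)
      (-(2 * (x ^ 2 + y ^ 2) * a' / (a t) ^ 3 + 2 * z ^ 2 * b' / (b t) ^ 3)) t := by
  refine (((hasDerivAt_const t (x ^ 2 + y ^ 2)).fun_div (ha.fun_pow 2) (pow_ne_zero 2 ha0)).fun_add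
    ((hasDerivAt_const t (z ^ 2)).fun_div (hb.fun_pow 2) (pow_ne_zero 2 hb0))).congr_deriv ?_
  field_simp
  ring

theorem hasDerivAt_selfSimilarVariable_x :
    HasDerivAt (fun x' => selfSimilarVariable a b t x' y z) (2 * x / (a t) ^ 2) x := by
  unfold selfSimilarVariable
  refine ((((hasDerivAt_pow 2 x).add_const (y ^ 2)).div_const ((a t) ^ 2)).add_const
    (z ^ 2 / (b t) ^ 2)).congr_deriv ?_
  norm_num

theorem hasDerivAt_selfSimilarVariable_y :
    HasDerivAt (fun y' => selfSimilarVariable a b t x y' z) (2 * y / (a t) ^ 2) y := by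
  unfold selfSimilarVariable
  refine ((((hasDerivAt_pow 2 y).const_add (x ^ 2)).div_const ((a t) ^ 2)).add_const
    (z ^ 2 / (b t) ^ 2)).congr_deriv ?_
  norm_num

theorem hasDerivAt_selfSimilarVariable_z :
    HasDerivAt (fun z' => selfSimilarVariable a b t x y z') (2 * z / (b t) ^ 2) z := by
  unfold selfSimilarVariable
  refine (((hasDerivAt_pow 2 z).div_const ((b t) ^ 2)).const_add
    ((x ^ 2 + y ^ 2) / (a t) ^ 2)).congr_deriv ?_
  norm_num

theorem selfSimilarVariable_transport (ha0 : a t ≠ 0) (hb0 : b t ≠ 0) (G : ℝ) :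
    -(2 * (x ^ 2 + y ^ 2) * a' / (a t) ^ 3 + 2 * z ^ 2 * b' / (b t) ^ 3)
      + (a' / a t * x - G * y) * (2 * x / (a t) ^ 2)
      + (G * x + a' / a t * y) * (2 * y / (a t) ^ 2)
      + b' / b t * z * (2 * z / (b t) ^ 2) = 0 := by
  field_simp
  ring

theorem hasDerivAt_sq_mul (ha : HasDerivAt a a' t) (hb : HasDerivAt b b' t)
    (ha0 : a t ≠ 0) (hb0 : b t ≠ 0) :
    HasDerivAt (fun t' => (a t') ^ 2 * b t')
      ((a t) ^ 2 * b t * (2 * (a' / a t) + b' / b t)) t := by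
  refine ((ha.fun_pow 2).fun_mul hb).congr_deriv ?_
  field_simp
  ring

end RotationalSelfSimilar

open RotationalSelfSimilar

theorem mass_equation_rotational_selfsimilar_general
    (f G a b : ℝ → ℝ)
    (hf : ContDiff ℝ 1 f)
    (ha : ContDiff ℝ 1 a) (hb : ContDiff ℝ 1 b)
    (ha_pos : ∀ t, 0 < a t) (hb_pos : ∀ t, 0 < b t)
    (ρ u₁ u₂ u₃ : ℝ → ℝ → ℝ → ℝ → ℝ)
    (hρ : ∀ t x y z, ρ t x y z =
      f ((x ^ 2 + y ^ 2) / (a t) ^ 2 + z ^ 2 / (b t) ^ 2) / ((a t) ^ 2 * b t))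
    (hu₁ : ∀ t x y z, u₁ t x y z = (deriv a t / a t) * x - G t * y)
    (hu₂ : ∀ t x y z, u₂ t x y z = G t * x + (deriv a t / a t) * y)
    (hu₃ : ∀ t x y z, u₃ t x y z = (deriv b t / b t) * z) :
    ∀ t x y z : ℝ,
      deriv (fun t' => ρ t' x y z) t
        + deriv (fun x' => ρ t x' y z * u₁ t x' y z) x
        + deriv (fun y' => ρ t x y' z * u₂ t x y' z) y
        + deriv (fun z' => ρ t x y z' * u₃ t x y z') z = 0 := by
  intro t x y z
  have hρ' : ∀ t x y z, ρ t x y z = f (selfSimilarVariable a b t x y z) / ((a t) ^ 2 * b t) :=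
    hρ
  have hf' := fun s => (hf.differentiable one_ne_zero s).hasDerivAt
  have ha' := (ha.differentiable one_ne_zero t).hasDerivAt
  have hb' := (hb.differentiable one_ne_zero t).hasDerivAt
  have ha0 := (ha_pos t).ne'
  have hb0 := (hb_pos t).ne'
  simp only [hρ', hu₁, hu₂, hu₃]
  rw [((hf' _).comp_div (hasDerivAt_selfSimilarVariable_time ha' hb' ha0 hb0)
      (hasDerivAt_sq_mul ha' hb' ha0 hb0) (by positivity)).deriv,
    ((hf' _).comp_div_const_mul hasDerivAt_selfSimilarVariable_x
      (((hasDerivAt_id' x).const_mul _).sub_const _)).deriv,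
    ((hf' _).comp_div_const_mul hasDerivAt_selfSimilarVariable_y
      (((hasDerivAt_id' y).const_mul _).const_add _)).deriv,
    ((hf' _).comp_div_const_mul hasDerivAt_selfSimilarVariable_z
      ((hasDerivAt_id' z).const_mul _)).deriv]
  linear_combination deriv f (selfSimilarVariable a b t x y z) / ((a t) ^ 2 * b t)
    * selfSimilarVariable_transport (x := x) (y := y) (z := z) (a' := deriv a t) (b' := deriv b t)
      ha0 hb0 (G t)

/-- The rotational self-similar ansatz
    ρ = f(s)/(a(t)² b(t)), u₁ = (a'/a)x − G y, u₂ = G x + (a'/a)y, u₃ = (b'/b)z,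
    with self-similar variable s = (x²+y²)/a(t)² + z²/b(t)², solves the 3D
    equation of conservation of mass ∂ₜρ + ∂ₓ(ρu₁) + ∂_y(ρu₂) + ∂_z(ρu₃) = 0. -/
theorem mass_equation_rotational_selfsimilar
    (f G a b : ℝ → ℝ)
    (hf : ContDiff ℝ 1 f) (hf_nonneg : ∀ s, 0 ≤ f s)
    (hG : ContDiff ℝ 1 G)
    (ha : ContDiff ℝ 1 a) (hb : ContDiff ℝ 1 b)
    (ha_pos : ∀ t, 0 < a t) (hb_pos : ∀ t, 0 < b t)
    (ρ u₁ u₂ u₃ : ℝ → ℝ → ℝ → ℝ → ℝ)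
    (hρ : ∀ t x y z, ρ t x y z =
      f ((x ^ 2 + y ^ 2) / (a t) ^ 2 + z ^ 2 / (b t) ^ 2) / ((a t) ^ 2 * b t))
    (hu₁ : ∀ t x y z, u₁ t x y z = (deriv a t / a t) * x - G t * y)
    (hu₂ : ∀ t x y z, u₂ t x y z = G t * x + (deriv a t / a t) * y)
    (hu₃ : ∀ t x y z, u₃ t x y z = (deriv b t / b t) * z) :
    ∀ t x y z : ℝ,
      deriv (fun t' => ρ t' x y z) t
        + deriv (fun x' => ρ t x' y z * u₁ t x' y z) x
        + deriv (fun y' => ρ t x y' z * u₂ t x y' z) y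
        + deriv (fun z' => ρ t x y z' * u₃ t x y z') z = 0 :=
  mass_equation_rotational_selfsimilar_general f G a b hf ha hb ha_pos hb_pos ρ u₁ u₂ u₃ hρ hu₁ hu₂
    hu₃
end

section
/- Let K > 0, λ ∈ ℝ, α ≥ 0 and ξ ≠ 0 be constants, and take γ = 1. Let a, b : I → ℝ be C² functions on an interval I containing 0, with a(t) > 0 and b(t) > 0 on I, satisfying the Emden system a''(t) − ξ²/a(t)³ = λ/a(t) and b''(t) = λ/b(t), with a(0) = a₀ > 0, a'(0) = a₁, b(0) = b₀ > 0, b'(0) = b₁. Define f(s) = α e^{−λs/(2K)}, s = (x² + y²)/a(t)² + z²/b(t)², ρ = f(s)/(a(t)² b(t)), u₁ = (a'(t)/a(t)) x − (ξ/a(t)²) y, u₂ = (ξ/a(t)²) x + (a'(t)/a(t)) y, u₃ = (b'(t)/b(t)) z. Then (ρ, u₁, u₂, u₃) is a classical solution of the isentropic compressible Euler equations in ℝ³ with γ = 1: ∂ₜρ + ∇·(ρu) = 0 and ρ(∂ₜu + (u·∇)u) + K∇ρ = 0 at every (t,x,y,z) with t ∈ I. -/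
set_option maxHeartbeats 1000000 in
/-- For γ = 1, the rotational self-similar ansatz with
    f(s) = α e^{−λs/(2K)} and (a, b) solving the Emden system
    a'' − ξ²/a³ = λ/a, b'' = λ/b is a classical solution of the 3D isentropic
    compressible Euler equations ∂ₜρ + ∇·(ρu) = 0,
    ρ(∂ₜu + (u·∇)u) + K∇ρ = 0.  (Here `lam` denotes λ.) -/
theorem euler_rotational_selfsimilar_gamma_one
    (K lam α ξ a₀ a₁ b₀ b₁ : ℝ)
    (hK : 0 < K) (hα : 0 ≤ α) (hξ : ξ ≠ 0)
    (I : Set ℝ) (hI_open : IsOpen I) (hI0 : (0 : ℝ) ∈ I)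
    (a b : ℝ → ℝ)
    (haC2 : ContDiffOn ℝ 2 a I) (hbC2 : ContDiffOn ℝ 2 b I)
    (ha_pos : ∀ t ∈ I, 0 < a t) (hb_pos : ∀ t ∈ I, 0 < b t)
    (ha_ode : ∀ t ∈ I, deriv (deriv a) t - ξ ^ 2 / (a t) ^ 3 = lam / a t)
    (hb_ode : ∀ t ∈ I, deriv (deriv b) t = lam / b t)
    (ha₀ : a 0 = a₀) (ha₀_pos : 0 < a₀) (ha₁ : deriv a 0 = a₁)
    (hb₀ : b 0 = b₀) (hb₀_pos : 0 < b₀) (hb₁ : deriv b 0 = b₁)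
    (f : ℝ → ℝ) (hf : ∀ s, f s = α * Real.exp (-(lam * s) / (2 * K)))
    (ρ u₁ u₂ u₃ : ℝ → ℝ → ℝ → ℝ → ℝ)
    (hρ : ∀ t x y z, ρ t x y z =
      f ((x ^ 2 + y ^ 2) / (a t) ^ 2 + z ^ 2 / (b t) ^ 2) / ((a t) ^ 2 * b t))
    (hu₁ : ∀ t x y z, u₁ t x y z = (deriv a t / a t) * x - (ξ / (a t) ^ 2) * y)
    (hu₂ : ∀ t x y z, u₂ t x y z = (ξ / (a t) ^ 2) * x + (deriv a t / a t) * y)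
    (hu₃ : ∀ t x y z, u₃ t x y z = (deriv b t / b t) * z) :
    ∀ t ∈ I, ∀ x y z : ℝ,
      -- conservation of mass
      (deriv (fun t' => ρ t' x y z) t
        + deriv (fun x' => ρ t x' y z * u₁ t x' y z) x
        + deriv (fun y' => ρ t x y' z * u₂ t x y' z) y
        + deriv (fun z' => ρ t x y z' * u₃ t x y z') z = 0) ∧
      -- first momentum equation
      (ρ t x y z * (deriv (fun t' => u₁ t' x y z) t
          + u₁ t x y z * deriv (fun x' => u₁ t x' y z) x
          + u₂ t x y z * deriv (fun y' => u₁ t x y' z) y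
          + u₃ t x y z * deriv (fun z' => u₁ t x y z') z)
        + K * deriv (fun x' => ρ t x' y z) x = 0) ∧
      -- second momentum equation
      (ρ t x y z * (deriv (fun t' => u₂ t' x y z) t
          + u₁ t x y z * deriv (fun x' => u₂ t x' y z) x
          + u₂ t x y z * deriv (fun y' => u₂ t x y' z) y
          + u₃ t x y z * deriv (fun z' => u₂ t x y z') z)
        + K * deriv (fun y' => ρ t x y' z) y = 0) ∧
      -- third momentum equation
      (ρ t x y z * (deriv (fun t' => u₃ t' x y z) t
          + u₁ t x y z * deriv (fun x' => u₃ t x' y z) x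
          + u₂ t x y z * deriv (fun y' => u₃ t x y' z) y
          + u₃ t x y z * deriv (fun z' => u₃ t x y z') z)
        + K * deriv (fun z' => ρ t x y z') z = 0) := by
  intro t ht x y z
  have hAne : a t ≠ 0 := (ha_pos t ht).ne'
  have hBne : b t ≠ 0 := (hb_pos t ht).ne'
  have hKne : K ≠ 0 := hK.ne'
  have hA2ne : (a t) ^ 2 ≠ 0 := pow_ne_zero _ hAne
  have hB2ne : (b t) ^ 2 ≠ 0 := pow_ne_zero _ hBne
  have hmem : I ∈ nhds t := hI_open.mem_nhds ht
  have ha' : HasDerivAt a (deriv a t) t :=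
    ((haC2.differentiableOn (by norm_num)).differentiableAt hmem).hasDerivAt
  have hb' : HasDerivAt b (deriv b t) t :=
    ((hbC2.differentiableOn (by norm_num)).differentiableAt hmem).hasDerivAt
  have ha'' : HasDerivAt (deriv a) (deriv (deriv a) t) t :=
    (((haC2.deriv_of_isOpen (m := 1) hI_open (by norm_num)).differentiableOn
      one_ne_zero).differentiableAt hmem).hasDerivAt
  have hb'' : HasDerivAt (deriv b) (deriv (deriv b) t) t :=
    (((hbC2.deriv_of_isOpen (m := 1) hI_open (by norm_num)).differentiableOn
      one_ne_zero).differentiableAt hmem).hasDerivAt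
  have hA2 : deriv (deriv a) t = lam / a t + ξ ^ 2 / (a t) ^ 3 := by
    have := ha_ode t ht; linarith
  have hB2 : deriv (deriv b) t = lam / b t := hb_ode t ht
  -- t derivative of ρ
  have hρt := ((((((((hasDerivAt_const t (x ^ 2 + y ^ 2)).div (ha'.pow (n := 2)) hA2ne).add
      ((hasDerivAt_const t (z ^ 2)).div (hb'.pow (n := 2)) hB2ne)).const_mul lam).neg).div_const
      (2 * K)).exp.const_mul α).div ((ha'.pow (n := 2)).mul hb') (mul_ne_zero hA2ne hBne))
  -- x derivative of ρ
  have hρx := ((((((((hasDerivAt_pow 2 x).add_const (y ^ 2)).div_const ((a t) ^ 2)).add_const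
      (z ^ 2 / (b t) ^ 2)).const_mul lam).neg).div_const (2 * K)).exp.const_mul α).div_const
      ((a t) ^ 2 * b t)
  -- y derivative of ρ
  have hρy := ((((((((hasDerivAt_pow 2 y).const_add (x ^ 2)).div_const ((a t) ^ 2)).add_const
      (z ^ 2 / (b t) ^ 2)).const_mul lam).neg).div_const (2 * K)).exp.const_mul α).div_const
      ((a t) ^ 2 * b t)
  -- z derivative of ρ
  have hρz := (((((((hasDerivAt_pow 2 z).div_const ((b t) ^ 2)).const_add
      ((x ^ 2 + y ^ 2) / (a t) ^ 2)).const_mul lam).neg).div_const (2 * K)).exp.const_mul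
      α).div_const ((a t) ^ 2 * b t)
  -- velocities at fixed t, as HasDerivAt in each space variable
  have hu1x := ((hasDerivAt_id' (𝕜 := ℝ) (x := x)).const_mul (deriv a t / a t)).sub_const
      (ξ / (a t) ^ 2 * y)
  have hu1y := (hasDerivAt_const y (deriv a t / a t * x)).sub
      ((hasDerivAt_id' (𝕜 := ℝ) (x := y)).const_mul (ξ / (a t) ^ 2))
  have hu2x := ((hasDerivAt_id' (𝕜 := ℝ) (x := x)).const_mul (ξ / (a t) ^ 2)).add_const
      (deriv a t / a t * y)
  have hu2y := ((hasDerivAt_id' (𝕜 := ℝ) (x := y)).const_mul (deriv a t / a t)).const_add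
      (ξ / (a t) ^ 2 * x)
  have hu3z := (hasDerivAt_id' (𝕜 := ℝ) (x := z)).const_mul (deriv b t / b t)
  -- t derivatives of velocities
  have hu1t := ((ha''.div ha' hAne).mul_const x).sub
      (((hasDerivAt_const t ξ).div (ha'.pow (n := 2)) hA2ne).mul_const y)
  have hu2t := (((hasDerivAt_const t ξ).div (ha'.pow (n := 2)) hA2ne).mul_const x).add
      ((ha''.div ha' hAne).mul_const y)
  have hu3t := (hb''.div hb' hBne).mul_const z
  -- products for the mass equation
  have hm1 := hρx.mul hu1x
  have hm2 := hρy.mul hu2y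
  have hm3 := hρz.mul hu3z
  simp only [Pi.div_def, Pi.add_def, Pi.mul_def, Pi.sub_def, Pi.neg_def, Pi.pow_def] at hρt hu1t hu2t hu3t hm1 hm2 hm3 hρx hρy hρz hu1x hu1y hu2x hu2y hu3z
  simp only [hρ, hu₁, hu₂, hu₃, hf]
  refine ⟨?_, ?_, ?_, ?_⟩
  · rw [hρt.deriv, hm1.deriv, hm2.deriv, hm3.deriv]
    set A := a t with hAdef
    set B := b t with hBdef
    set A1 := deriv a t with hA1def
    set B1 := deriv b t with hB1def
    set E := Real.exp (-(lam * ((x ^ 2 + y ^ 2) / A ^ 2 + z ^ 2 / B ^ 2)) / (2 * K)) with hEdef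
    push_cast
    norm_num
    field_simp
    ring
  · rw [hu1t.deriv, hu1x.deriv, hu1y.deriv, hρx.deriv, deriv_const, hA2]
    set A := a t with hAdef
    set B := b t with hBdef
    set A1 := deriv a t with hA1def
    set B1 := deriv b t with hB1def
    set E := Real.exp (-(lam * ((x ^ 2 + y ^ 2) / A ^ 2 + z ^ 2 / B ^ 2)) / (2 * K)) with hEdef
    push_cast
    norm_num
    field_simp
    ring
  · rw [hu2t.deriv, hu2x.deriv, hu2y.deriv, hρy.deriv, deriv_const, hA2]
    set A := a t with hAdef
    set B := b t with hBdef
    set A1 := deriv a t with hA1def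
    set B1 := deriv b t with hB1def
    set E := Real.exp (-(lam * ((x ^ 2 + y ^ 2) / A ^ 2 + z ^ 2 / B ^ 2)) / (2 * K)) with hEdef
    push_cast
    norm_num
    field_simp
    ring
  · rw [hu3t.deriv, hu3z.deriv, hρz.deriv, deriv_const, deriv_const, hB2]
    set A := a t with hAdef
    set B := b t with hBdef
    set A1 := deriv a t with hA1def
    set B1 := deriv b t with hB1def
    set E := Real.exp (-(lam * ((x ^ 2 + y ^ 2) / A ^ 2 + z ^ 2 / B ^ 2)) / (2 * K)) with hEdef
    push_cast
    norm_num
    field_simp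
    ring
end

section
/- Let ξ ≠ 0, λ < 0, a₀ > 0, b₀ > 0, a₁, b₁ ∈ ℝ, and take γ = 1. Then every solution of the Emden system a''(t) − ξ²/a(t)³ = λ/a(t), b''(t) = λ/b(t), a(0) = a₀, a'(0) = a₁, b(0) = b₀, b'(0) = b₁ blows up in finite time: there is no pair of C² functions a, b : [0,∞) → ℝ with a(t) > 0 and b(t) > 0 for all t ≥ 0 satisfying the system and the initial conditions. -/
/-! Let `b > 0` solve `b'' = λ / b` on `t > 0`, with `λ < 0`. Then `b'` is decreasing, and it can
never become negative, for `b` would then decrease at least linearly and reach `0`. On the other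
hand the energy `b'² / 2 - λ log b` is conserved, so `b` stays below some `M`; hence
`b'' ≤ λ / M < 0`, and `b'` does become negative after all. -/

open Set Real

theorem sub_le_mul_sub_of_hasDerivAt_le {f f' : ℝ → ℝ} {s C : ℝ}
    (hf : ∀ x ∈ Ici s, HasDerivAt f (f' x) x) (hC : ∀ x ∈ Ici s, f' x ≤ C)
    {x y : ℝ} (hx : s ≤ x) (hxy : x ≤ y) : f y - f x ≤ C * (y - x) := by
  exact (convex_Ici s).image_sub_le_mul_sub_of_deriv_le
    (fun z hz => (hf z hz).continuousAt.continuousWithinAt)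
    (fun z hz => (hf z (interior_subset hz)).differentiableAt.differentiableWithinAt)
    (fun z hz => (hf z (interior_subset hz)).deriv ▸ hC z (interior_subset hz))
    x hx y (hx.trans hxy) hxy

theorem exists_neg_of_hasDerivAt_le_neg {f f' : ℝ → ℝ} {s c : ℝ}
    (hf : ∀ x ∈ Ici s, HasDerivAt f (f' x) x) (hc : c < 0) (hf'c : ∀ x ∈ Ici s, f' x ≤ c) :
    ∃ t ≥ s, f t < 0 := by
  have hq : 0 ≤ |f s| / -c := div_nonneg (abs_nonneg _) (by linarith)
  have hcq : c * (|f s| / -c) = -|f s| := by rw [div_neg, mul_neg, mul_div_cancel₀ _ hc.ne]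
  have hst : s ≤ s + |f s| / -c + 1 := by linarith
  refine ⟨_, hst, ?_⟩
  have hdrop := sub_le_mul_sub_of_hasDerivAt_le hf hf'c le_rfl hst
  nlinarith [le_abs_self (f s)]

theorem DifferentiableOn.hasDerivAt_derivWithin_Ici {f : ℝ → ℝ} {a x : ℝ}
    (hf : DifferentiableOn ℝ f (Ici a)) (hx : a < x) :
    HasDerivAt f (derivWithin f (Ici a) x) x := by
  rw [derivWithin_of_mem_nhds (Ici_mem_nhds hx)]
  exact ((hf x hx.le).differentiableAt (Ici_mem_nhds hx)).hasDerivAt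

noncomputable def emdenEnergy (lam : ℝ) (b b' : ℝ → ℝ) (t : ℝ) : ℝ :=
  b' t ^ 2 / 2 - lam * log (b t)

section

variable {lam : ℝ} {b b' : ℝ → ℝ}

theorem hasDerivAt_emdenEnergy (hb : ∀ x ∈ Ioi 0, HasDerivAt b (b' x) x)
    (hb' : ∀ x ∈ Ioi 0, HasDerivAt b' (lam / b x) x) (hpos : ∀ x ∈ Ioi 0, 0 < b x)
    {x : ℝ} (hx : x ∈ Ioi 0) : HasDerivAt (emdenEnergy lam b b') 0 x := by
  have hbx := (hpos x hx).ne'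
  refine ((((hb' x hx).fun_pow 2).div_const 2).fun_sub
    (((hb x hx).log hbx).const_mul lam)).congr_deriv ?_
  field_simp
  ring

theorem emdenEnergy_eq (hb : ∀ x ∈ Ioi 0, HasDerivAt b (b' x) x)
    (hb' : ∀ x ∈ Ioi 0, HasDerivAt b' (lam / b x) x) (hpos : ∀ x ∈ Ioi 0, 0 < b x)
    {x y : ℝ} (hx : x ∈ Ioi 0) (hy : y ∈ Ioi 0) :
    emdenEnergy lam b b' x = emdenEnergy lam b b' y :=
  isOpen_Ioi.is_const_of_deriv_eq_zero isPreconnected_Ioi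
    (fun _ hz => (hasDerivAt_emdenEnergy hb hb' hpos hz).differentiableAt.differentiableWithinAt)
    (fun _ hz => (hasDerivAt_emdenEnergy hb hb' hpos hz).deriv) hx hy

theorem le_exp_emdenEnergy (hlam : lam < 0) (hb : ∀ x ∈ Ioi 0, HasDerivAt b (b' x) x)
    (hb' : ∀ x ∈ Ioi 0, HasDerivAt b' (lam / b x) x) (hpos : ∀ x ∈ Ioi 0, 0 < b x)
    {x : ℝ} (hx : x ∈ Ioi 0) : b x ≤ exp (emdenEnergy lam b b' 1 / -lam) := by
  rw [← emdenEnergy_eq hb hb' hpos hx (by norm_num : (1 : ℝ) ∈ Ioi 0),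
    ← log_le_iff_le_exp (hpos x hx), le_div_iff₀ (neg_pos.2 hlam), emdenEnergy]
  nlinarith [sq_nonneg (b' x)]

theorem emden_deriv_nonneg (hlam : lam < 0) (hb : ∀ x ∈ Ioi 0, HasDerivAt b (b' x) x)
    (hb' : ∀ x ∈ Ioi 0, HasDerivAt b' (lam / b x) x) (hpos : ∀ x ∈ Ioi 0, 0 < b x)
    {s : ℝ} (hs : s ∈ Ioi 0) : 0 ≤ b' s := by
  by_contra! hneg
  have hsub : Ici s ⊆ Ioi 0 := Ici_subset_Ioi.2 hs
  have hb'_le : ∀ x ∈ Ici s, b' x ≤ b' s := fun x hx => by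
    have := sub_le_mul_sub_of_hasDerivAt_le (fun z hz => hb' z (hsub hz))
      (fun z hz => (div_neg_of_neg_of_pos hlam (hpos z (hsub hz))).le) le_rfl hx
    linarith
  obtain ⟨t, hst, hbt⟩ :=
    exists_neg_of_hasDerivAt_le_neg (fun z hz => hb z (hsub hz)) hneg hb'_le
  exact (hpos t (hsub hst)).not_gt hbt

theorem not_forall_pos_of_emden (hlam : lam < 0) (hb : ∀ x ∈ Ioi 0, HasDerivAt b (b' x) x)
    (hb' : ∀ x ∈ Ioi 0, HasDerivAt b' (lam / b x) x) : ¬ ∀ x ∈ Ioi 0, 0 < b x := by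
  intro hpos
  set M := exp (emdenEnergy lam b b' 1 / -lam)
  have hsub : Ici (1 : ℝ) ⊆ Ioi 0 := Ici_subset_Ioi.2 one_pos
  have hb''_le : ∀ x ∈ Ici (1 : ℝ), lam / b x ≤ lam / M := fun x hx => by
    have := div_le_div_of_nonneg_left (neg_nonneg.2 hlam.le) (hpos x (hsub hx))
      (le_exp_emdenEnergy hlam hb hb' hpos (hsub hx))
    rwa [neg_div, neg_div, neg_le_neg_iff] at this
  obtain ⟨t, ht, hb't⟩ := exists_neg_of_hasDerivAt_le_neg (fun z hz => hb' z (hsub hz))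
    (div_neg_of_neg_of_pos hlam (exp_pos _)) hb''_le
  exact (emden_deriv_nonneg hlam hb hb' hpos (hsub ht)).not_gt hb't

end

theorem emden_system_blowup_gamma_one_lambda_neg_general
    (ξ lam a₀ a₁ b₀ b₁ : ℝ)
    (hlam : lam < 0) :
    ¬ ∃ a b : ℝ → ℝ,
      ContDiffOn ℝ 2 a (Set.Ici 0) ∧ ContDiffOn ℝ 2 b (Set.Ici 0) ∧
      (∀ t ∈ Set.Ici (0 : ℝ), 0 < a t ∧ 0 < b t) ∧
      (∀ t ∈ Set.Ici (0 : ℝ),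
        derivWithin (derivWithin a (Set.Ici 0)) (Set.Ici 0) t
          - ξ ^ 2 / (a t) ^ 3 = lam / a t) ∧
      (∀ t ∈ Set.Ici (0 : ℝ),
        derivWithin (derivWithin b (Set.Ici 0)) (Set.Ici 0) t = lam / b t) ∧
      a 0 = a₀ ∧ derivWithin a (Set.Ici 0) 0 = a₁ ∧
      b 0 = b₀ ∧ derivWithin b (Set.Ici 0) 0 = b₁ := by
  rintro ⟨a, b, -, hb, hpos, -, hb'', -, -, -, -⟩
  have hb' : ContDiffOn ℝ 1 (derivWithin b (Ici 0)) (Ici 0) :=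
    hb.derivWithin (uniqueDiffOn_Ici 0) (by norm_num)
  refine not_forall_pos_of_emden hlam
    (fun x hx => (hb.differentiableOn two_ne_zero).hasDerivAt_derivWithin_Ici hx)
    (fun x hx => ?_) (fun x hx => (hpos x (Ioi_subset_Ici_self hx)).2)
  rw [← hb'' x (Ioi_subset_Ici_self hx)]
  exact (hb'.differentiableOn one_ne_zero).hasDerivAt_derivWithin_Ici hx

/-- Finite-time blowup for the Emden system with γ = 1 and λ < 0
    (written `lam`): there is no pair of positive C² functions a, b on [0,∞)
    solving a'' − ξ²/a³ = λ/a, b'' = λ/b with a(0) = a₀ > 0, a'(0) = a₁,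
    b(0) = b₀ > 0, b'(0) = b₁. -/
theorem emden_system_blowup_gamma_one_lambda_neg
    (ξ lam a₀ a₁ b₀ b₁ : ℝ)
    (hξ : ξ ≠ 0) (hlam : lam < 0) (ha₀ : 0 < a₀) (hb₀ : 0 < b₀) :
    ¬ ∃ a b : ℝ → ℝ,
      ContDiffOn ℝ 2 a (Set.Ici 0) ∧ ContDiffOn ℝ 2 b (Set.Ici 0) ∧
      (∀ t ∈ Set.Ici (0 : ℝ), 0 < a t ∧ 0 < b t) ∧
      (∀ t ∈ Set.Ici (0 : ℝ),
        derivWithin (derivWithin a (Set.Ici 0)) (Set.Ici 0) t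
          - ξ ^ 2 / (a t) ^ 3 = lam / a t) ∧
      (∀ t ∈ Set.Ici (0 : ℝ),
        derivWithin (derivWithin b (Set.Ici 0)) (Set.Ici 0) t = lam / b t) ∧
      a 0 = a₀ ∧ derivWithin a (Set.Ici 0) 0 = a₁ ∧
      b 0 = b₀ ∧ derivWithin b (Set.Ici 0) 0 = b₁ :=
  emden_system_blowup_gamma_one_lambda_neg_general ξ lam a₀ a₁ b₀ b₁ hlam
end

section
/- Let ξ ≠ 0, λ < 0, γ > 1, a₀ > 0, b₀ > 0, a₁ ∈ ℝ, and b₁ ≤ 0. Then every solution of the Emden system a''(t) − ξ²/a(t)³ = λ/(a(t)^{2γ−1} b(t)^{γ−1}), b''(t) = λ/(a(t)^{2γ−2} b(t)^{γ}), a(0) = a₀, a'(0) = a₁, b(0) = b₀, b'(0) = b₁ blows up in finite time: there is no pair of C² functions a, b : [0,∞) → ℝ with a(t) > 0 and b(t) > 0 for all t ≥ 0 satisfying the system and the initial conditions. -/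
/-!
Since `λ < 0`, the right-hand side `λ / (a^{2γ-2} b^γ)` of the equation for `b` is negative as
long as `a` and `b` are positive, so `b'` is strictly decreasing; with `b'(0) ≤ 0` this gives
`b' ≤ b'(1) < 0` on `[1, ∞)`. By the mean value theorem `b` then lies below a line of negative
slope on `[1, ∞)` and must become negative.
-/

open Set

theorem derivWithin_Ici_eq_deriv {f : ℝ → ℝ} {x₀ x : ℝ} (hx : x₀ < x) :
    derivWithin f (Ici x₀) x = deriv f x :=
  derivWithin_of_mem_nhds (Ici_mem_nhds hx)

theorem strictAntiOn_Ici_of_derivWithin_neg {g : ℝ → ℝ} {x₀ : ℝ}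
    (hg : ContinuousOn g (Ici x₀)) (hg' : ∀ x ∈ Ioi x₀, derivWithin g (Ici x₀) x < 0) :
    StrictAntiOn g (Ici x₀) :=
  strictAntiOn_of_deriv_neg (convex_Ici x₀) hg fun x hx => by
    rw [interior_Ici] at hx
    rw [← derivWithin_Ici_eq_deriv hx]
    exact hg' x hx

theorem exists_neg_of_deriv_le_neg {f : ℝ → ℝ} {s C : ℝ} (hf : ContinuousOn f (Ici s))
    (hf' : DifferentiableOn ℝ f (Ioi s)) (hC : C < 0) (hle : ∀ x ∈ Ioi s, deriv f x ≤ C) :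
    ∃ t ∈ Ici s, f t < 0 := by
  set t := s + (|f s| + 1) / -C
  have hst : s ≤ t := le_add_of_nonneg_right (div_nonneg (by positivity) (by linarith))
  have hmvt : f t - f s ≤ C * (t - s) :=
    (convex_Ici s).image_sub_le_mul_sub_of_deriv_le hf (by rwa [interior_Ici])
      (by rwa [interior_Ici]) s self_mem_Ici t hst hst
  have hslope : C * (t - s) = -(|f s| + 1) := by
    simp only [t, add_sub_cancel_left]
    field_simp [hC.ne]
  exact ⟨t, hst, by linarith [le_abs_self (f s)]⟩

theorem exists_neg_of_deriv2_neg_of_deriv_nonpos {f : ℝ → ℝ} {x₀ : ℝ}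
    (hf : ContDiffOn ℝ 2 f (Ici x₀))
    (hf'' : ∀ x ∈ Ioi x₀, derivWithin (derivWithin f (Ici x₀)) (Ici x₀) x < 0)
    (hf' : derivWithin f (Ici x₀) x₀ ≤ 0) :
    ∃ t ∈ Ici x₀, f t < 0 := by
  set f' := derivWithin f (Ici x₀)
  have hanti : StrictAntiOn f' (Ici x₀) :=
    strictAntiOn_Ici_of_derivWithin_neg
      (hf.derivWithin (uniqueDiffOn_Ici x₀) (m := 1) (by norm_num)).continuousOn hf''
  have hsub : Ici (x₀ + 1) ⊆ Ici x₀ := Ici_subset_Ici.2 (le_add_of_nonneg_right zero_le_one)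
  have hx₁ : x₀ + 1 ∈ Ici x₀ := hsub self_mem_Ici
  have hslope : f' (x₀ + 1) < 0 :=
    (hanti self_mem_Ici hx₁ (lt_add_one x₀)).trans_le hf'
  have hdiff : DifferentiableOn ℝ f (Ici x₀) := hf.differentiableOn (by norm_num)
  obtain ⟨t, ht, hft⟩ := exists_neg_of_deriv_le_neg
    (hdiff.continuousOn.mono hsub) (hdiff.mono (Ioi_subset_Ici_self.trans hsub)) hslope
    fun x hx => by
      have hx₀ : x₀ < x := (lt_add_one x₀).trans hx
      rw [← derivWithin_Ici_eq_deriv hx₀]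
      exact (hanti hx₁ hx₀.le hx).le
  exact ⟨t, hsub ht, hft⟩

theorem emden_system_blowup_gamma_gt_one_lambda_neg_general
    (ξ lam γ a₀ a₁ b₀ b₁ : ℝ)
    (hlam : lam < 0) (hb₁ : b₁ ≤ 0) :
    ¬ ∃ a b : ℝ → ℝ,
      ContDiffOn ℝ 2 a (Set.Ici 0) ∧ ContDiffOn ℝ 2 b (Set.Ici 0) ∧
      (∀ t ∈ Set.Ici (0 : ℝ), 0 < a t ∧ 0 < b t) ∧
      (∀ t ∈ Set.Ici (0 : ℝ),
        derivWithin (derivWithin a (Set.Ici 0)) (Set.Ici 0) t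
          - ξ ^ 2 / (a t) ^ 3
          = lam / ((a t) ^ (2 * γ - 1) * (b t) ^ (γ - 1))) ∧
      (∀ t ∈ Set.Ici (0 : ℝ),
        derivWithin (derivWithin b (Set.Ici 0)) (Set.Ici 0) t
          = lam / ((a t) ^ (2 * γ - 2) * (b t) ^ γ)) ∧
      a 0 = a₀ ∧ derivWithin a (Set.Ici 0) 0 = a₁ ∧
      b 0 = b₀ ∧ derivWithin b (Set.Ici 0) 0 = b₁ := by
  rintro ⟨a, b, -, hb, hpos, -, hb'', -, -, -, hb'₀⟩
  have hb''_neg : ∀ x ∈ Ioi (0 : ℝ), derivWithin (derivWithin b (Ici 0)) (Ici 0) x < 0 :=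
    fun x hx => by
      obtain ⟨hax, hbx⟩ := hpos x (mem_Ici_of_Ioi hx)
      rw [hb'' x (mem_Ici_of_Ioi hx)]
      exact div_neg_of_neg_of_pos hlam (by positivity)
  obtain ⟨t, ht, hbt⟩ := exists_neg_of_deriv2_neg_of_deriv_nonpos hb hb''_neg (hb'₀.trans_le hb₁)
  exact (hpos t ht).2.not_gt hbt

/-- Finite-time blowup for the Emden system with γ > 1, λ < 0
    (written `lam`) and b₁ ≤ 0: there is no pair of positive C² functions a, b
    on [0,∞) solving a'' − ξ²/a³ = λ/(a^{2γ−1} b^{γ−1}),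
    b'' = λ/(a^{2γ−2} b^γ) with a(0) = a₀ > 0, a'(0) = a₁, b(0) = b₀ > 0,
    b'(0) = b₁. -/
theorem emden_system_blowup_gamma_gt_one_lambda_neg
    (ξ lam γ a₀ a₁ b₀ b₁ : ℝ)
    (hξ : ξ ≠ 0) (hlam : lam < 0) (hγ : 1 < γ)
    (ha₀ : 0 < a₀) (hb₀ : 0 < b₀) (hb₁ : b₁ ≤ 0) :
    ¬ ∃ a b : ℝ → ℝ,
      ContDiffOn ℝ 2 a (Set.Ici 0) ∧ ContDiffOn ℝ 2 b (Set.Ici 0) ∧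
      (∀ t ∈ Set.Ici (0 : ℝ), 0 < a t ∧ 0 < b t) ∧
      (∀ t ∈ Set.Ici (0 : ℝ),
        derivWithin (derivWithin a (Set.Ici 0)) (Set.Ici 0) t
          - ξ ^ 2 / (a t) ^ 3
          = lam / ((a t) ^ (2 * γ - 1) * (b t) ^ (γ - 1))) ∧
      (∀ t ∈ Set.Ici (0 : ℝ),
        derivWithin (derivWithin b (Set.Ici 0)) (Set.Ici 0) t
          = lam / ((a t) ^ (2 * γ - 2) * (b t) ^ γ)) ∧
      a 0 = a₀ ∧ derivWithin a (Set.Ici 0) 0 = a₁ ∧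
      b 0 = b₀ ∧ derivWithin b (Set.Ici 0) 0 = b₁ :=
  emden_system_blowup_gamma_gt_one_lambda_neg_general ξ lam γ a₀ a₁ b₀ b₁ hlam hb₁
end

section
/- Let K > 0, μ > 0, λ ∈ ℝ, α ≥ 0, ξ ≠ 0, and γ > 1, and assume either λ ≤ 0, or λ > 0 and γ < 2. Let a, b : I → ℝ be C² positive functions on an interval I containing 0 satisfying the Emden system a''(t) − ξ²/a(t)³ = λ/(a(t)^{2γ−1} b(t)^{γ−1}) and b''(t) = λ/(a(t)^{2γ−2} b(t)^{γ}). Define s = (x² + y²)/a(t)² + z²/b(t)², f(s) = max( (−λ(γ−1)/(2Kγ) s + α)^{1/(γ−1)}, 0 ), ρ = f(s)/(a(t)² b(t)), u₁ = (a'(t)/a(t)) x − (ξ/a(t)²) y, u₂ = (ξ/a(t)²) x + (a'(t)/a(t)) y, u₃ = (b'(t)/b(t)) z. Then (ρ, u) also satisfies the isentropic compressible Navier–Stokes equations in ℝ³: ∂ₜρ + ∇·(ρu) = 0 and ρ(∂ₜu + (u·∇)u) + K∇(ρ^γ) = μΔu at every (t,x,y,z) with t ∈ I. -/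
/-!
The velocity field is linear in space, so `Δu = 0` and the viscous term drops out: these are
solutions of the compressible Euler equations.

Mass: the similarity variable `s` is transported by `u` and `a²b` grows at the rate `div u`, so
for `ρ = f(s) / (a²b)` the continuity equation is the chain rule wherever `f` is differentiable
at `s`. When `λ ≤ 0` or `γ < 2` this can fail only at the origin (for `α = 0`, `γ ≥ 2`); there
`u = 0` and `ρ` is continuous, which still gives `∂ᵢ(ρ uᵢ) = ρ ∂ᵢuᵢ`.

Momentum: the acceleration `∂ₜu + (u·∇)u` is `(a''/a - ξ²/a⁴) (x, y)` horizontally and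
`(b''/b) z` vertically, which by the Emden system is `λ b (x, y) / (a²b)^γ` and
`λ a² z / (b (a²b)^γ)`. The slope `c = -λ(γ-1)/(2Kγ)` of the profile
`f(s) = max(cs + α, 0)^(1/(γ-1))` is chosen so that `(K f^γ)' = -(λ/2) f`, and then `K ∇(ρ^γ)`
cancels `ρ` times the acceleration.
-/

open Topology

theorem hasDerivAt_max_zero_rpow {e w : ℝ} (h : 0 < w ∨ 1 < e) :
    HasDerivAt (fun v : ℝ => max v 0 ^ e) (e * max w 0 ^ (e - 1)) w := by
  rcases lt_trichotomy w 0 with hw | rfl | hw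
  · have he : 1 < e := h.resolve_left hw.not_gt
    have hzero : (fun v : ℝ => max v 0 ^ e) =ᶠ[𝓝 w] fun _ => 0 := by
      filter_upwards [eventually_lt_nhds hw] with v hv
      rw [max_eq_right hv.le, Real.zero_rpow (by linarith)]
    rw [max_eq_right hw.le, Real.zero_rpow (by linarith), mul_zero]
    exact (hasDerivAt_const w 0).congr_of_eventuallyEq hzero
  · have he : 1 < e := h.resolve_left (lt_irrefl 0)
    rw [max_self, Real.zero_rpow (by linarith), mul_zero, ← hasDerivWithinAt_univ,
      ← Set.Iic_union_Ici]
    refine HasDerivWithinAt.union ?_ ?_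
    · refine (hasDerivWithinAt_const 0 (Set.Iic 0) 0).congr (fun v hv => ?_) ?_
      · rw [max_eq_right hv, Real.zero_rpow (by linarith)]
      · rw [max_self, Real.zero_rpow (by linarith)]
    · have hpow := (Real.hasDerivAt_rpow_const (x := 0) (Or.inr he.le)).hasDerivWithinAt
        (s := Set.Ici 0)
      rw [Real.zero_rpow (by linarith), mul_zero] at hpow
      exact hpow.congr (fun v hv => by rw [max_eq_left hv]) (by rw [max_self])
  · have hpos : (fun v : ℝ => max v 0 ^ e) =ᶠ[𝓝 w] fun v => v ^ e := by
      filter_upwards [eventually_gt_nhds hw] with v hv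
      rw [max_eq_left hv.le]
    rw [max_eq_left hw.le]
    exact (Real.hasDerivAt_rpow_const (Or.inl hw.ne')).congr_of_eventuallyEq hpos

theorem hasDerivAt_mul_of_continuousAt_of_eq_zero {g ℓ : ℝ → ℝ} {ℓ' x₀ : ℝ}
    (hg : ContinuousAt g x₀) (hℓ : HasDerivAt ℓ ℓ' x₀) (hℓ₀ : ℓ x₀ = 0) :
    HasDerivAt (fun v => g v * ℓ v) (g x₀ * ℓ') x₀ := by
  rw [hasDerivAt_iff_tendsto_slope] at hℓ ⊢
  refine ((hg.tendsto.mono_left nhdsWithin_le_nhds).mul hℓ).congr fun v => ?_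
  simp only [slope_def_field, hℓ₀, mul_zero, sub_zero]
  ring

theorem rpow_two_mul_sub_one_mul_rpow_sub_one {a b γ : ℝ} (ha : 0 < a) (hb : 0 < b) :
    a ^ (2 * γ - 1) * b ^ (γ - 1) = (a ^ 2 * b) ^ γ / (a * b) := by
  rw [Real.mul_rpow (by positivity) hb.le, Real.rpow_sub_one ha.ne', Real.rpow_sub_one hb.ne',
    ← Real.rpow_natCast_mul ha.le]
  push_cast
  field_simp

theorem rpow_two_mul_sub_two_mul_rpow {a b γ : ℝ} (ha : 0 < a) (hb : 0 < b) :
    a ^ (2 * γ - 2) * b ^ γ = (a ^ 2 * b) ^ γ / a ^ 2 := by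
  rw [Real.mul_rpow (by positivity) hb.le, Real.rpow_sub ha, ← Real.rpow_natCast_mul ha.le]
  push_cast
  rw [Real.rpow_two]
  field_simp

theorem ContDiffOn.differentiableAt_deriv {f : ℝ → ℝ} {s : Set ℝ} {t : ℝ}
    (hf : ContDiffOn ℝ 2 f s) (hs : IsOpen s) (ht : t ∈ s) : DifferentiableAt ℝ (deriv f) t :=
  ((hf.deriv_of_isOpen hs (m := 1) (by norm_num)).differentiableOn one_ne_zero).differentiableAt
    (hs.mem_nhds ht)

noncomputable section

def materialDerivative (u₁ u₂ u₃ w : ℝ → ℝ → ℝ → ℝ → ℝ) (t x y z : ℝ) : ℝ :=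
  deriv (fun t' => w t' x y z) t + u₁ t x y z * deriv (fun x' => w t x' y z) x
    + u₂ t x y z * deriv (fun y' => w t x y' z) y + u₃ t x y z * deriv (fun z' => w t x y z') z

def laplacian (w : ℝ → ℝ → ℝ → ℝ → ℝ) (t x y z : ℝ) : ℝ :=
  deriv (fun x' => deriv (fun x'' => w t x'' y z) x') x
    + deriv (fun y' => deriv (fun y'' => w t x y'' z) y') y
    + deriv (fun z' => deriv (fun z'' => w t x y z'') z') z

namespace RotationalSelfSimilar

def polytropicProfile (c α q s : ℝ) : ℝ := max (c * s + α) 0 ^ q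

variable {c α q : ℝ}

theorem polytropicProfile_nonneg (s : ℝ) : 0 ≤ polytropicProfile c α q s :=
  Real.rpow_nonneg (le_max_right _ _) q

theorem continuous_polytropicProfile (hq : 0 ≤ q) : Continuous (polytropicProfile c α q) :=
  (by fun_prop : Continuous fun s => max (c * s + α) 0).rpow_const fun _ => Or.inr hq

theorem hasDerivAt_polytropicProfile {s : ℝ} (h : 0 < c * s + α ∨ 1 < q) :
    HasDerivAt (polytropicProfile c α q) (q * max (c * s + α) 0 ^ (q - 1) * c) s := by
  have := (hasDerivAt_max_zero_rpow h).comp s (((hasDerivAt_id s).const_mul c).add_const α)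
  rwa [mul_one] at this

theorem differentiableAt_polytropicProfile {s : ℝ} (hq : 0 < q) (hα : 0 ≤ α)
    (h : 0 ≤ c ∨ 1 < q) (hs : 0 < s) : DifferentiableAt ℝ (polytropicProfile c α q) s := by
  by_cases hreg : 0 < c * s + α ∨ 1 < q
  · exact (hasDerivAt_polytropicProfile hreg).differentiableAt
  push Not at hreg
  have hc : c = 0 := by nlinarith [h.resolve_right hreg.2.not_gt]
  have hα0 : α = 0 := by subst hc; linarith
  subst hc hα0
  have : polytropicProfile 0 0 q = fun _ => 0 := by
    funext s; simp [polytropicProfile, Real.zero_rpow hq.ne']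
  rw [this]
  exact differentiableAt_const 0

theorem polytropicProfile_rpow (s p : ℝ) :
    polytropicProfile c α q s ^ p = polytropicProfile c α (q * p) s :=
  (Real.rpow_mul (le_max_right _ _) q p).symm

theorem hasDerivAt_pressure_polytropicProfile {K lam γ : ℝ} (hK : K ≠ 0) (hγ : 1 < γ) (s : ℝ) :
    HasDerivAt
      (fun s => K * polytropicProfile (-(lam * (γ - 1)) / (2 * K * γ)) α (1 / (γ - 1)) s ^ γ)
      (-(lam / 2 * polytropicProfile (-(lam * (γ - 1)) / (2 * K * γ)) α (1 / (γ - 1)) s)) s := by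
  have hγ1 : 0 < γ - 1 := by linarith
  have hexp : 1 / (γ - 1) * γ = 1 / (γ - 1) + 1 := by field_simp; ring
  simp only [polytropicProfile_rpow, hexp]
  have hq : 1 < 1 / (γ - 1) + 1 := by simp only [lt_add_iff_pos_left]; positivity
  refine ((hasDerivAt_polytropicProfile (Or.inr hq)).const_mul K).congr_deriv ?_
  simp only [polytropicProfile, add_sub_cancel_right]
  field_simp
  ring

def similarityVariable (a b : ℝ → ℝ) (t x y z : ℝ) : ℝ :=
  (x ^ 2 + y ^ 2) / a t ^ 2 + z ^ 2 / b t ^ 2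

def density (F a b : ℝ → ℝ) (t x y z : ℝ) : ℝ :=
  F (similarityVariable a b t x y z) / (a t ^ 2 * b t)

def velocity₁ (a : ℝ → ℝ) (ξ t x y _z : ℝ) : ℝ := deriv a t / a t * x - ξ / a t ^ 2 * y

def velocity₂ (a : ℝ → ℝ) (ξ t x y _z : ℝ) : ℝ := ξ / a t ^ 2 * x + deriv a t / a t * y

def velocity₃ (b : ℝ → ℝ) (t _x _y z : ℝ) : ℝ := deriv b t / b t * z

variable {F a b : ℝ → ℝ} {ξ t x y z : ℝ}

theorem similarityVariable_pos (ha : a t ≠ 0) (hb : b t ≠ 0) (h : ¬(x = 0 ∧ y = 0 ∧ z = 0)) :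
    0 < similarityVariable a b t x y z := by
  unfold similarityVariable
  rcases not_and_or.mp h with hx | hyz
  · positivity
  rcases not_and_or.mp hyz with hy | hz <;> positivity

theorem hasDerivAt_similarityVariable_t (ha : DifferentiableAt ℝ a t) (hb : DifferentiableAt ℝ b t)
    (ha0 : a t ≠ 0) (hb0 : b t ≠ 0) :
    HasDerivAt (fun t' => similarityVariable a b t' x y z)
      (-(2 * deriv a t * (x ^ 2 + y ^ 2) / a t ^ 3) - 2 * deriv b t * z ^ 2 / b t ^ 3) t := by
  have := ((hasDerivAt_const t (x ^ 2 + y ^ 2)).div (ha.hasDerivAt.pow 2) (pow_ne_zero 2 ha0)).add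
    ((hasDerivAt_const t (z ^ 2)).div (hb.hasDerivAt.pow 2) (pow_ne_zero 2 hb0))
  refine this.congr_deriv ?_
  simp only [Pi.pow_apply]
  field_simp
  ring

variable (a b ξ t x y z)

theorem hasDerivAt_similarityVariable_x :
    HasDerivAt (fun x' => similarityVariable a b t x' y z) (2 * x / a t ^ 2) x := by
  unfold similarityVariable
  simpa using (((hasDerivAt_pow 2 x).add_const (y ^ 2)).div_const (a t ^ 2)).add_const
    (z ^ 2 / b t ^ 2)

theorem hasDerivAt_similarityVariable_y :
    HasDerivAt (fun y' => similarityVariable a b t x y' z) (2 * y / a t ^ 2) y := by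
  unfold similarityVariable
  simpa using (((hasDerivAt_pow 2 y).const_add (x ^ 2)).div_const (a t ^ 2)).add_const
    (z ^ 2 / b t ^ 2)

theorem hasDerivAt_similarityVariable_z :
    HasDerivAt (fun z' => similarityVariable a b t x y z') (2 * z / b t ^ 2) z := by
  unfold similarityVariable
  simpa using ((hasDerivAt_pow 2 z).div_const (b t ^ 2)).const_add ((x ^ 2 + y ^ 2) / a t ^ 2)

theorem hasDerivAt_velocity₁_x :
    HasDerivAt (fun x' => velocity₁ a ξ t x' y z) (deriv a t / a t) x := by
  unfold velocity₁
  simpa using ((hasDerivAt_id x).const_mul (deriv a t / a t)).sub_const (ξ / a t ^ 2 * y)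

theorem hasDerivAt_velocity₂_y :
    HasDerivAt (fun y' => velocity₂ a ξ t x y' z) (deriv a t / a t) y := by
  unfold velocity₂
  simpa using ((hasDerivAt_id y).const_mul (deriv a t / a t)).const_add (ξ / a t ^ 2 * x)

theorem hasDerivAt_velocity₃_z :
    HasDerivAt (fun z' => velocity₃ b t x y z') (deriv b t / b t) z := by
  unfold velocity₃
  simpa using (hasDerivAt_id z).const_mul (deriv b t / b t)

variable {a b ξ t x y z}

theorem mass_conservation_of_differentiableAt
    (hF : DifferentiableAt ℝ F (similarityVariable a b t x y z))
    (ha : DifferentiableAt ℝ a t) (hb : DifferentiableAt ℝ b t) (ha0 : a t ≠ 0) (hb0 : b t ≠ 0) :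
    deriv (fun t' => density F a b t' x y z) t
      + deriv (fun x' => density F a b t x' y z * velocity₁ a ξ t x' y z) x
      + deriv (fun y' => density F a b t x y' z * velocity₂ a ξ t x y' z) y
      + deriv (fun z' => density F a b t x y z' * velocity₃ b t x y z') z = 0 := by
  have hF := hF.hasDerivAt
  have ht : HasDerivAt (fun t' => density F a b t' x y z) _ t :=
    (hF.comp t (hasDerivAt_similarityVariable_t ha hb ha0 hb0)).div
      ((ha.hasDerivAt.pow 2).mul hb.hasDerivAt) (mul_ne_zero (pow_ne_zero 2 ha0) hb0)
  have hx : HasDerivAt (fun x' => density F a b t x' y z * velocity₁ a ξ t x' y z) _ x :=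
    ((hF.comp x (hasDerivAt_similarityVariable_x a b t x y z)).div_const _).mul
      (hasDerivAt_velocity₁_x a ξ t x y z)
  have hy : HasDerivAt (fun y' => density F a b t x y' z * velocity₂ a ξ t x y' z) _ y :=
    ((hF.comp y (hasDerivAt_similarityVariable_y a b t x y z)).div_const _).mul
      (hasDerivAt_velocity₂_y a ξ t x y z)
  have hz : HasDerivAt (fun z' => density F a b t x y z' * velocity₃ b t x y z') _ z :=
    ((hF.comp z (hasDerivAt_similarityVariable_z a b t x y z)).div_const _).mul
      (hasDerivAt_velocity₃_z b t x y z)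
  rw [ht.deriv, hx.deriv, hy.deriv, hz.deriv]
  simp only [Function.comp_apply, Pi.pow_apply, velocity₁, velocity₂, velocity₃]
  field_simp
  ring

theorem mass_conservation_at_origin (hF : ContinuousAt F 0)
    (ha : DifferentiableAt ℝ a t) (hb : DifferentiableAt ℝ b t) (ha0 : a t ≠ 0) (hb0 : b t ≠ 0) :
    deriv (fun t' => density F a b t' 0 0 0) t
      + deriv (fun x' => density F a b t x' 0 0 * velocity₁ a ξ t x' 0 0) 0
      + deriv (fun y' => density F a b t 0 y' 0 * velocity₂ a ξ t 0 y' 0) 0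
      + deriv (fun z' => density F a b t 0 0 z' * velocity₃ b t 0 0 z') 0 = 0 := by
  have hs : ∀ t', similarityVariable a b t' 0 0 0 = 0 := fun t' => by simp [similarityVariable]
  have hρ : (fun t' => density F a b t' 0 0 0) = fun t' => F 0 / (a t' ^ 2 * b t') := by
    funext t'
    rw [density, hs]
  have ht : HasDerivAt (fun t' => F 0 / (a t' ^ 2 * b t')) _ t :=
    (hasDerivAt_const t (F 0)).div ((ha.hasDerivAt.pow 2).mul hb.hasDerivAt)
      (mul_ne_zero (pow_ne_zero 2 ha0) hb0)
  have hx : HasDerivAt (fun x' => density F a b t x' 0 0 * velocity₁ a ξ t x' 0 0) _ 0 :=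
    hasDerivAt_mul_of_continuousAt_of_eq_zero
      ((hF.comp_of_eq (hasDerivAt_similarityVariable_x a b t 0 0 0).continuousAt (hs t)).div_const
        (a t ^ 2 * b t)) (hasDerivAt_velocity₁_x a ξ t 0 0 0) (by simp [velocity₁])
  have hy : HasDerivAt (fun y' => density F a b t 0 y' 0 * velocity₂ a ξ t 0 y' 0) _ 0 :=
    hasDerivAt_mul_of_continuousAt_of_eq_zero
      ((hF.comp_of_eq (hasDerivAt_similarityVariable_y a b t 0 0 0).continuousAt (hs t)).div_const
        (a t ^ 2 * b t)) (hasDerivAt_velocity₂_y a ξ t 0 0 0) (by simp [velocity₂])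
  have hz : HasDerivAt (fun z' => density F a b t 0 0 z' * velocity₃ b t 0 0 z') _ 0 :=
    hasDerivAt_mul_of_continuousAt_of_eq_zero
      ((hF.comp_of_eq (hasDerivAt_similarityVariable_z a b t 0 0 0).continuousAt (hs t)).div_const
        (a t ^ 2 * b t)) (hasDerivAt_velocity₃_z b t 0 0 0) (by simp [velocity₃])
  rw [hρ, ht.deriv, hx.deriv, hy.deriv, hz.deriv]
  simp only [Pi.pow_apply, density, hs]
  field_simp
  ring

theorem laplacian_velocity₁ : laplacian (velocity₁ a ξ) t x y z = 0 := by
  simp [laplacian, velocity₁]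

theorem laplacian_velocity₂ : laplacian (velocity₂ a ξ) t x y z = 0 := by
  simp [laplacian, velocity₂]

theorem laplacian_velocity₃ : laplacian (velocity₃ b) t x y z = 0 := by
  simp [laplacian, velocity₃]

theorem materialDerivative_velocity₁ (ha : DifferentiableAt ℝ a t)
    (ha' : DifferentiableAt ℝ (deriv a) t) (ha0 : a t ≠ 0) :
    materialDerivative (velocity₁ a ξ) (velocity₂ a ξ) (velocity₃ b) (velocity₁ a ξ) t x y z
      = (deriv (deriv a) t / a t - ξ ^ 2 / a t ^ 4) * x := by
  have ht : HasDerivAt (fun t' => velocity₁ a ξ t' x y z) _ t :=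
    ((ha'.hasDerivAt.div ha.hasDerivAt ha0).mul_const x).sub
      (((hasDerivAt_const t ξ).div (ha.hasDerivAt.pow 2) (pow_ne_zero 2 ha0)).mul_const y)
  have hy : deriv (fun y' => velocity₁ a ξ t x y' z) y = -(ξ / a t ^ 2) := by simp [velocity₁]
  have hz : deriv (fun z' => velocity₁ a ξ t x y z') z = 0 := by simp [velocity₁]
  rw [materialDerivative, ht.deriv, (hasDerivAt_velocity₁_x a ξ t x y z).deriv, hy, hz]
  simp only [velocity₁, velocity₂, Pi.pow_apply]
  field_simp
  ring

theorem materialDerivative_velocity₂ (ha : DifferentiableAt ℝ a t)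
    (ha' : DifferentiableAt ℝ (deriv a) t) (ha0 : a t ≠ 0) :
    materialDerivative (velocity₁ a ξ) (velocity₂ a ξ) (velocity₃ b) (velocity₂ a ξ) t x y z
      = (deriv (deriv a) t / a t - ξ ^ 2 / a t ^ 4) * y := by
  have ht : HasDerivAt (fun t' => velocity₂ a ξ t' x y z) _ t :=
    (((hasDerivAt_const t ξ).div (ha.hasDerivAt.pow 2) (pow_ne_zero 2 ha0)).mul_const x).add
      ((ha'.hasDerivAt.div ha.hasDerivAt ha0).mul_const y)
  have hx : deriv (fun x' => velocity₂ a ξ t x' y z) x = ξ / a t ^ 2 := by simp [velocity₂]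
  have hz : deriv (fun z' => velocity₂ a ξ t x y z') z = 0 := by simp [velocity₂]
  rw [materialDerivative, ht.deriv, hx, (hasDerivAt_velocity₂_y a ξ t x y z).deriv, hz]
  simp only [velocity₁, velocity₂, Pi.pow_apply]
  field_simp
  ring

theorem materialDerivative_velocity₃ (hb : DifferentiableAt ℝ b t)
    (hb' : DifferentiableAt ℝ (deriv b) t) (hb0 : b t ≠ 0) :
    materialDerivative (velocity₁ a ξ) (velocity₂ a ξ) (velocity₃ b) (velocity₃ b) t x y z
      = deriv (deriv b) t / b t * z := by
  have ht : HasDerivAt (fun t' => velocity₃ b t' x y z) _ t :=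
    (hb'.hasDerivAt.div hb.hasDerivAt hb0).mul_const z
  have hx : deriv (fun x' => velocity₃ b t x' y z) x = 0 := by simp [velocity₃]
  have hy : deriv (fun y' => velocity₃ b t x y' z) y = 0 := by simp [velocity₃]
  rw [materialDerivative, ht.deriv, hx, hy, (hasDerivAt_velocity₃_z b t x y z).deriv]
  simp only [velocity₃]
  field_simp
  ring

theorem hasDerivAt_pressure_comp {K lam γ J S' v : ℝ} {S : ℝ → ℝ} (hF0 : ∀ s, 0 ≤ F s)
    (hp : ∀ s, HasDerivAt (fun s => K * F s ^ γ) (-(lam / 2 * F s)) s) (hJ : 0 < J)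
    (hS : HasDerivAt S S' v) :
    HasDerivAt (fun v => K * (F (S v) / J) ^ γ) (-(lam / 2 * F (S v)) * S' / J ^ γ) v := by
  have hsplit : (fun v => K * (F (S v) / J) ^ γ) = fun v => K * F (S v) ^ γ / J ^ γ := by
    funext v
    rw [Real.div_rpow (hF0 _) hJ.le, mul_div_assoc]
  rw [hsplit]
  exact ((hp (S v)).comp v hS).div_const (J ^ γ)

theorem momentum_equation₁ {K lam γ μ : ℝ} (hF0 : ∀ s, 0 ≤ F s)
    (hp : ∀ s, HasDerivAt (fun s => K * F s ^ γ) (-(lam / 2 * F s)) s)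
    (ha : DifferentiableAt ℝ a t) (ha' : DifferentiableAt ℝ (deriv a) t) (ha0 : 0 < a t)
    (hb0 : 0 < b t)
    (hode : deriv (deriv a) t - ξ ^ 2 / a t ^ 3 = lam / (a t ^ (2 * γ - 1) * b t ^ (γ - 1))) :
    density F a b t x y z
        * materialDerivative (velocity₁ a ξ) (velocity₂ a ξ) (velocity₃ b) (velocity₁ a ξ) t x y z
      + K * deriv (fun x' => density F a b t x' y z ^ γ) x
      = μ * laplacian (velocity₁ a ξ) t x y z := by
  have hpx : HasDerivAt (fun x' => K * density F a b t x' y z ^ γ) _ x :=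
    hasDerivAt_pressure_comp hF0 hp (by positivity : 0 < a t ^ 2 * b t)
      (hasDerivAt_similarityVariable_x a b t x y z)
  rw [rpow_two_mul_sub_one_mul_rpow_sub_one ha0 hb0, sub_eq_iff_eq_add] at hode
  rw [← deriv_const_mul_field, hpx.deriv, materialDerivative_velocity₁ ha ha' ha0.ne',
    laplacian_velocity₁, hode, density]
  field_simp
  ring

theorem momentum_equation₂ {K lam γ μ : ℝ} (hF0 : ∀ s, 0 ≤ F s)
    (hp : ∀ s, HasDerivAt (fun s => K * F s ^ γ) (-(lam / 2 * F s)) s)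
    (ha : DifferentiableAt ℝ a t) (ha' : DifferentiableAt ℝ (deriv a) t) (ha0 : 0 < a t)
    (hb0 : 0 < b t)
    (hode : deriv (deriv a) t - ξ ^ 2 / a t ^ 3 = lam / (a t ^ (2 * γ - 1) * b t ^ (γ - 1))) :
    density F a b t x y z
        * materialDerivative (velocity₁ a ξ) (velocity₂ a ξ) (velocity₃ b) (velocity₂ a ξ) t x y z
      + K * deriv (fun y' => density F a b t x y' z ^ γ) y
      = μ * laplacian (velocity₂ a ξ) t x y z := by
  have hpy : HasDerivAt (fun y' => K * density F a b t x y' z ^ γ) _ y :=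
    hasDerivAt_pressure_comp hF0 hp (by positivity : 0 < a t ^ 2 * b t)
      (hasDerivAt_similarityVariable_y a b t x y z)
  rw [rpow_two_mul_sub_one_mul_rpow_sub_one ha0 hb0, sub_eq_iff_eq_add] at hode
  rw [← deriv_const_mul_field, hpy.deriv, materialDerivative_velocity₂ ha ha' ha0.ne',
    laplacian_velocity₂, hode, density]
  field_simp
  ring

theorem momentum_equation₃ {K lam γ μ : ℝ} (hF0 : ∀ s, 0 ≤ F s)
    (hp : ∀ s, HasDerivAt (fun s => K * F s ^ γ) (-(lam / 2 * F s)) s)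
    (hb : DifferentiableAt ℝ b t) (hb' : DifferentiableAt ℝ (deriv b) t) (ha0 : 0 < a t)
    (hb0 : 0 < b t)
    (hode : deriv (deriv b) t = lam / (a t ^ (2 * γ - 2) * b t ^ γ)) :
    density F a b t x y z
        * materialDerivative (velocity₁ a ξ) (velocity₂ a ξ) (velocity₃ b) (velocity₃ b) t x y z
      + K * deriv (fun z' => density F a b t x y z' ^ γ) z
      = μ * laplacian (velocity₃ b) t x y z := by
  have hpz : HasDerivAt (fun z' => K * density F a b t x y z' ^ γ) _ z :=
    hasDerivAt_pressure_comp hF0 hp (by positivity : 0 < a t ^ 2 * b t)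
      (hasDerivAt_similarityVariable_z a b t x y z)
  rw [rpow_two_mul_sub_two_mul_rpow ha0 hb0] at hode
  rw [← deriv_const_mul_field, hpz.deriv, materialDerivative_velocity₃ hb hb' hb0.ne',
    laplacian_velocity₃, hode, density]
  field_simp
  ring

end RotationalSelfSimilar

end

open RotationalSelfSimilar

theorem navier_stokes_rotational_selfsimilar_general
    (K μ lam α ξ γ : ℝ)
    (hK : 0 < K) (hα : 0 ≤ α) (hγ : 1 < γ)
    (hcase : lam ≤ 0 ∨ (0 < lam ∧ γ < 2))
    (I : Set ℝ) (hI_open : IsOpen I)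
    (a b : ℝ → ℝ)
    (haC2 : ContDiffOn ℝ 2 a I) (hbC2 : ContDiffOn ℝ 2 b I)
    (ha_pos : ∀ t ∈ I, 0 < a t) (hb_pos : ∀ t ∈ I, 0 < b t)
    (ha_ode : ∀ t ∈ I, deriv (deriv a) t - ξ ^ 2 / (a t) ^ 3
      = lam / ((a t) ^ (2 * γ - 1) * (b t) ^ (γ - 1)))
    (hb_ode : ∀ t ∈ I, deriv (deriv b) t
      = lam / ((a t) ^ (2 * γ - 2) * (b t) ^ γ))
    (f : ℝ → ℝ)
    (hf : ∀ s, f s = (max (-(lam * (γ - 1)) / (2 * K * γ) * s + α) 0) ^ (1 / (γ - 1)))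
    (ρ u₁ u₂ u₃ : ℝ → ℝ → ℝ → ℝ → ℝ)
    (hρ : ∀ t x y z, ρ t x y z =
      f ((x ^ 2 + y ^ 2) / (a t) ^ 2 + z ^ 2 / (b t) ^ 2) / ((a t) ^ 2 * b t))
    (hu₁ : ∀ t x y z, u₁ t x y z = (deriv a t / a t) * x - (ξ / (a t) ^ 2) * y)
    (hu₂ : ∀ t x y z, u₂ t x y z = (ξ / (a t) ^ 2) * x + (deriv a t / a t) * y)
    (hu₃ : ∀ t x y z, u₃ t x y z = (deriv b t / b t) * z) :
    ∀ t ∈ I, ∀ x y z : ℝ,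
      -- conservation of mass
      (deriv (fun t' => ρ t' x y z) t
        + deriv (fun x' => ρ t x' y z * u₁ t x' y z) x
        + deriv (fun y' => ρ t x y' z * u₂ t x y' z) y
        + deriv (fun z' => ρ t x y z' * u₃ t x y z') z = 0) ∧
      -- first momentum equation with viscosity
      (ρ t x y z * (deriv (fun t' => u₁ t' x y z) t
          + u₁ t x y z * deriv (fun x' => u₁ t x' y z) x
          + u₂ t x y z * deriv (fun y' => u₁ t x y' z) y
          + u₃ t x y z * deriv (fun z' => u₁ t x y z') z)
        + K * deriv (fun x' => ρ t x' y z ^ γ) x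
        = μ * (deriv (fun x' => deriv (fun x'' => u₁ t x'' y z) x') x
            + deriv (fun y' => deriv (fun y'' => u₁ t x y'' z) y') y
            + deriv (fun z' => deriv (fun z'' => u₁ t x y z'') z') z)) ∧
      -- second momentum equation with viscosity
      (ρ t x y z * (deriv (fun t' => u₂ t' x y z) t
          + u₁ t x y z * deriv (fun x' => u₂ t x' y z) x
          + u₂ t x y z * deriv (fun y' => u₂ t x y' z) y
          + u₃ t x y z * deriv (fun z' => u₂ t x y z') z)
        + K * deriv (fun y' => ρ t x y' z ^ γ) y
        = μ * (deriv (fun x' => deriv (fun x'' => u₂ t x'' y z) x') x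
            + deriv (fun y' => deriv (fun y'' => u₂ t x y'' z) y') y
            + deriv (fun z' => deriv (fun z'' => u₂ t x y z'') z') z)) ∧
      -- third momentum equation with viscosity
      (ρ t x y z * (deriv (fun t' => u₃ t' x y z) t
          + u₁ t x y z * deriv (fun x' => u₃ t x' y z) x
          + u₂ t x y z * deriv (fun y' => u₃ t x y' z) y
          + u₃ t x y z * deriv (fun z' => u₃ t x y z') z)
        + K * deriv (fun z' => ρ t x y z' ^ γ) z
        = μ * (deriv (fun x' => deriv (fun x'' => u₃ t x'' y z) x') x
            + deriv (fun y' => deriv (fun y'' => u₃ t x y'' z) y') y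
            + deriv (fun z' => deriv (fun z'' => u₃ t x y z'') z') z)) := by
  intro t ht x y z
  obtain rfl : f = polytropicProfile (-(lam * (γ - 1)) / (2 * K * γ)) α (1 / (γ - 1)) := funext hf
  obtain rfl : ρ = density _ a b := by funext t x y z; exact hρ t x y z
  obtain rfl : u₁ = velocity₁ a ξ := by funext t x y z; exact hu₁ t x y z
  obtain rfl : u₂ = velocity₂ a ξ := by funext t x y z; exact hu₂ t x y z
  obtain rfl : u₃ = velocity₃ b := by funext t x y z; exact hu₃ t x y z
  have ha := (haC2.contDiffAt (hI_open.mem_nhds ht)).differentiableAt two_ne_zero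
  have hb := (hbC2.contDiffAt (hI_open.mem_nhds ht)).differentiableAt two_ne_zero
  have ha' := haC2.differentiableAt_deriv hI_open ht
  have hb' := hbC2.differentiableAt_deriv hI_open ht
  have hp := hasDerivAt_pressure_polytropicProfile (α := α) (lam := lam) hK.ne' hγ
  have hat := ha_pos t ht
  have hbt := hb_pos t ht
  refine ⟨?_, momentum_equation₁ polytropicProfile_nonneg hp ha ha' hat hbt (ha_ode t ht),
    momentum_equation₂ polytropicProfile_nonneg hp ha ha' hat hbt (ha_ode t ht),
    momentum_equation₃ polytropicProfile_nonneg hp hb hb' hat hbt (hb_ode t ht)⟩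
  have hγ1 : 0 < γ - 1 := by linarith
  have hq : 0 < 1 / (γ - 1) := by positivity
  have hreg : 0 ≤ -(lam * (γ - 1)) / (2 * K * γ) ∨ 1 < 1 / (γ - 1) := by
    rcases hcase with hlam | ⟨-, hγ2⟩
    · exact Or.inl (div_nonneg (by nlinarith) (by positivity))
    · exact Or.inr (by rw [lt_div_iff₀ hγ1]; linarith)
  by_cases h0 : x = 0 ∧ y = 0 ∧ z = 0
  · obtain ⟨rfl, rfl, rfl⟩ := h0
    exact mass_conservation_at_origin (continuous_polytropicProfile hq.le).continuousAt ha hb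
      hat.ne' hbt.ne'
  · exact mass_conservation_of_differentiableAt (differentiableAt_polytropicProfile hq hα hreg
      (similarityVariable_pos hat.ne' hbt.ne' h0)) ha hb hat.ne' hbt.ne'

/-- The rotational self-similar solutions (γ > 1; λ ≤ 0, or λ > 0
    and γ < 2) of the compressible Euler equations also solve the isentropic
    compressible Navier–Stokes equations in ℝ³ with any viscosity μ > 0:
    ∂ₜρ + ∇·(ρu) = 0 and ρ(∂ₜu + (u·∇)u) + K∇(ρ^γ) = μΔu.
    (Here `lam` denotes λ; real powers are `Real.rpow`.) -/
theorem navier_stokes_rotational_selfsimilar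
    (K μ lam α ξ γ : ℝ)
    (hK : 0 < K) (hμ : 0 < μ) (hα : 0 ≤ α) (hξ : ξ ≠ 0) (hγ : 1 < γ)
    (hcase : lam ≤ 0 ∨ (0 < lam ∧ γ < 2))
    (I : Set ℝ) (hI_open : IsOpen I)
    (a b : ℝ → ℝ)
    (haC2 : ContDiffOn ℝ 2 a I) (hbC2 : ContDiffOn ℝ 2 b I)
    (ha_pos : ∀ t ∈ I, 0 < a t) (hb_pos : ∀ t ∈ I, 0 < b t)
    (ha_ode : ∀ t ∈ I, deriv (deriv a) t - ξ ^ 2 / (a t) ^ 3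
      = lam / ((a t) ^ (2 * γ - 1) * (b t) ^ (γ - 1)))
    (hb_ode : ∀ t ∈ I, deriv (deriv b) t
      = lam / ((a t) ^ (2 * γ - 2) * (b t) ^ γ))
    (f : ℝ → ℝ)
    (hf : ∀ s, f s = (max (-(lam * (γ - 1)) / (2 * K * γ) * s + α) 0) ^ (1 / (γ - 1)))
    (ρ u₁ u₂ u₃ : ℝ → ℝ → ℝ → ℝ → ℝ)
    (hρ : ∀ t x y z, ρ t x y z =
      f ((x ^ 2 + y ^ 2) / (a t) ^ 2 + z ^ 2 / (b t) ^ 2) / ((a t) ^ 2 * b t))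
    (hu₁ : ∀ t x y z, u₁ t x y z = (deriv a t / a t) * x - (ξ / (a t) ^ 2) * y)
    (hu₂ : ∀ t x y z, u₂ t x y z = (ξ / (a t) ^ 2) * x + (deriv a t / a t) * y)
    (hu₃ : ∀ t x y z, u₃ t x y z = (deriv b t / b t) * z) :
    ∀ t ∈ I, ∀ x y z : ℝ,
      -- conservation of mass
      (deriv (fun t' => ρ t' x y z) t
        + deriv (fun x' => ρ t x' y z * u₁ t x' y z) x
        + deriv (fun y' => ρ t x y' z * u₂ t x y' z) y
        + deriv (fun z' => ρ t x y z' * u₃ t x y z') z = 0) ∧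
      -- first momentum equation with viscosity
      (ρ t x y z * (deriv (fun t' => u₁ t' x y z) t
          + u₁ t x y z * deriv (fun x' => u₁ t x' y z) x
          + u₂ t x y z * deriv (fun y' => u₁ t x y' z) y
          + u₃ t x y z * deriv (fun z' => u₁ t x y z') z)
        + K * deriv (fun x' => ρ t x' y z ^ γ) x
        = μ * (deriv (fun x' => deriv (fun x'' => u₁ t x'' y z) x') x
            + deriv (fun y' => deriv (fun y'' => u₁ t x y'' z) y') y
            + deriv (fun z' => deriv (fun z'' => u₁ t x y z'') z') z)) ∧
      -- second momentum equation with viscosity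
      (ρ t x y z * (deriv (fun t' => u₂ t' x y z) t
          + u₁ t x y z * deriv (fun x' => u₂ t x' y z) x
          + u₂ t x y z * deriv (fun y' => u₂ t x y' z) y
          + u₃ t x y z * deriv (fun z' => u₂ t x y z') z)
        + K * deriv (fun y' => ρ t x y' z ^ γ) y
        = μ * (deriv (fun x' => deriv (fun x'' => u₂ t x'' y z) x') x
            + deriv (fun y' => deriv (fun y'' => u₂ t x y'' z) y') y
            + deriv (fun z' => deriv (fun z'' => u₂ t x y z'') z') z)) ∧
      -- third momentum equation with viscosity
      (ρ t x y z * (deriv (fun t' => u₃ t' x y z) t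
          + u₁ t x y z * deriv (fun x' => u₃ t x' y z) x
          + u₂ t x y z * deriv (fun y' => u₃ t x y' z) y
          + u₃ t x y z * deriv (fun z' => u₃ t x y z') z)
        + K * deriv (fun z' => ρ t x y z' ^ γ) z
        = μ * (deriv (fun x' => deriv (fun x'' => u₃ t x'' y z) x') x
            + deriv (fun y' => deriv (fun y'' => u₃ t x y'' z) y') y
            + deriv (fun z' => deriv (fun z'' => u₃ t x y z'') z') z)) :=
  navier_stokes_rotational_selfsimilar_general K μ lam α ξ γ hK hα hγ hcase I hI_open a b haC2 hbC2
    ha_pos hb_pos ha_ode hb_ode f hf ρ u₁ u₂ u₃ hρ hu₁ hu₂ hu₃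
end
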